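/- arXiv:1612.08086 — 7 statements merged into one kernel-verified Lean document; each statement's English description precedes it below -/
import Mathlib

section
/- If f : I → ℝ is convex and x, y ∈ I with x < y, then (2/(y-x)) ∫ₓʸ f(t) dt ≤ f((x+y)/2) + (f(x)+f(y))/2. -/
/-!
Each half of `[x, y]` lies below the chord of `f` over it, so integrating the chords gives the
right Hermite–Hadamard (trapezoid) bound `∫ ≤ (length) * (mean of endpoint values)` on
`[x, (x+y)/2]` and on `[(x+y)/2, y]`; adding the two bounds gives the claim. Integrability of `f`
comes from continuity in the interior together with a two-sided bound: `f` is at most the larger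
endpoint value and, by midpoint convexity, at least twice the midpoint value minus that.
-/

open MeasureTheory Set

variable {f : ℝ → ℝ} {a b : ℝ}

lemma ConvexOn.le_chord (hf : ConvexOn ℝ (Icc a b) f) (hab : a < b) {t : ℝ} (ht : t ∈ Icc a b) :
    f t ≤ ((b - t) * f a + (t - a) * f b) / (b - a) := by
  have hba : 0 < b - a := sub_pos.2 hab
  have hsum : (b - t) / (b - a) + (t - a) / (b - a) = 1 := by field_simp; ring
  have hcomb : ((b - t) / (b - a)) • a + ((t - a) / (b - a)) • b = t := by
    simp only [smul_eq_mul]; field_simp; ring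
  have key := hf.2 (left_mem_Icc.2 hab.le) (right_mem_Icc.2 hab.le)
    (div_nonneg (sub_nonneg.2 ht.2) hba.le) (div_nonneg (sub_nonneg.2 ht.1) hba.le) hsum
  rw [hcomb, smul_eq_mul, smul_eq_mul] at key
  calc f t ≤ (b - t) / (b - a) * f a + (t - a) / (b - a) * f b := key
    _ = ((b - t) * f a + (t - a) * f b) / (b - a) := by ring

lemma ConvexOn.two_mul_apply_midpoint_le (hf : ConvexOn ℝ (Icc a b) f) {t : ℝ}
    (ht : t ∈ Icc a b) : 2 * f ((a + b) / 2) ≤ f t + f (a + b - t) := by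
  have ht' : a + b - t ∈ Icc a b := ⟨by linarith [ht.2], by linarith [ht.1]⟩
  have key := hf.2 ht ht' (by norm_num : (0 : ℝ) ≤ 1 / 2) (by norm_num : (0 : ℝ) ≤ 1 / 2)
    (by norm_num)
  have hmid : (1 / 2 : ℝ) • t + (1 / 2 : ℝ) • (a + b - t) = (a + b) / 2 := by
    simp only [smul_eq_mul]; ring
  rw [hmid, smul_eq_mul, smul_eq_mul] at key
  linarith

lemma ConvexOn.intervalIntegrable (hf : ConvexOn ℝ (Icc a b) f) (hab : a ≤ b) :
    IntervalIntegrable f volume a b := by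
  set M := max (f a) (f b)
  have upper : ∀ t ∈ Icc a b, f t ≤ M := fun t ht =>
    hf.le_on_segment (left_mem_Icc.2 hab) (right_mem_Icc.2 hab) (by rwa [segment_eq_Icc hab])
  have lower : ∀ t ∈ Icc a b, 2 * f ((a + b) / 2) - M ≤ f t := fun t ht => by
    linarith [hf.two_mul_apply_midpoint_le ht,
      upper (a + b - t) ⟨by linarith [ht.2], by linarith [ht.1]⟩]
  have hcont : ContinuousOn f (Ioo a b) := by
    simpa only [interior_Icc] using hf.continuousOn_interior
  rw [intervalIntegrable_iff_integrableOn_Ioo_of_le hab]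
  refine IntegrableOn.of_bound measure_Ioo_lt_top (hcont.aestronglyMeasurable measurableSet_Ioo)
    (max |2 * f ((a + b) / 2) - M| |M|) ?_
  refine (ae_restrict_iff' measurableSet_Ioo).2 (Filter.Eventually.of_forall fun t ht => ?_)
  exact abs_le_max_abs_abs (lower t (Ioo_subset_Icc_self ht)) (upper t (Ioo_subset_Icc_self ht))

lemma integral_chord (hab : a ≠ b) (u v : ℝ) :
    ∫ t in a..b, ((b - t) * u + (t - a) * v) / (b - a) = (b - a) * (u + v) / 2 := by
  have hba : b - a ≠ 0 := sub_ne_zero.2 hab.symm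
  rw [intervalIntegral.integral_div,
    intervalIntegral.integral_add ((by fun_prop : Continuous _).intervalIntegrable _ _)
      ((by fun_prop : Continuous _).intervalIntegrable _ _),
    intervalIntegral.integral_mul_const, intervalIntegral.integral_mul_const,
    intervalIntegral.integral_comp_sub_left (fun t => t),
    intervalIntegral.integral_comp_sub_right (fun t => t)]
  simp only [integral_id, sub_self]
  field_simp
  ring

lemma ConvexOn.integral_le_trapezoid (hf : ConvexOn ℝ (Icc a b) f) (hab : a < b) :
    ∫ t in a..b, f t ≤ (b - a) * (f a + f b) / 2 := by
  rw [← integral_chord hab.ne (f a) (f b)]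
  refine intervalIntegral.integral_mono_on hab.le (hf.intervalIntegrable hab.le)
    (Continuous.intervalIntegrable (by fun_prop) _ _) fun t ht => hf.le_chord hab ht

theorem hermite_hadamard_sum (I : Set ℝ) (f : ℝ → ℝ) (hf : ConvexOn ℝ I f)
    (x y : ℝ) (hx : x ∈ I) (hy : y ∈ I) (hxy : x < y) :
    (2 / (y - x)) * ∫ t in x..y, f t ≤ f ((x + y) / 2) + (f x + f y) / 2 := by
  set m := (x + y) / 2 with hm
  have hxm : x < m := by rw [hm]; linarith
  have hmy : m < y := by rw [hm]; linarith
  have hIcc : Icc x y ⊆ I := hf.1.ordConnected.out hx hy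
  have hleft : ConvexOn ℝ (Icc x m) f :=
    hf.subset ((Icc_subset_Icc_right hmy.le).trans hIcc) (convex_Icc x m)
  have hright : ConvexOn ℝ (Icc m y) f :=
    hf.subset ((Icc_subset_Icc_left hxm.le).trans hIcc) (convex_Icc m y)
  rw [← intervalIntegral.integral_add_adjacent_intervals (hleft.intervalIntegrable hxm.le)
    (hright.intervalIntegrable hmy.le), div_mul_eq_mul_div, div_le_iff₀ (by linarith)]
  have h₁ := hleft.integral_le_trapezoid hxm
  have h₂ := hright.integral_le_trapezoid hmy
  rw [show m - x = (y - x) / 2 by ring] at h₁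
  rw [show y - m = (y - x) / 2 by ring] at h₂
  linarith
end

section
/- If f : I → ℝ is 2-convex (i.e., all fourth-order divided differences [x₁,x₂,x₃,x₄; f] are nonnegative, equivalently f''' ≥ 0 when f ∈ C³), then for all x < y in I: (1/4) f(x) + (3/4) f((x+2y)/3) ≤ (1/(y-x)) ∫ₓʸ f(t) dt ≤ (3/4) f((2x+y)/3) + (1/4) f(y). -/
/-!
Both quadratures are exact on quadratics, so their errors are Peano-kernel integrals
`∫ K f'''`. For the right rule, integrate by parts three times against the kernel
`(t - a)³/6` on `[a, c]` and `(b - a)(t - b)²/8 + (t - b)³/6` on `[c, b]`, where `c = (2a + b)/3`.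
The two pieces agree to first order at `c`, so the boundary terms in `f''` and `f'` cancel and
only `(b - a)(3/4 f(c) + 1/4 f(b))` survives; both pieces are nonnegative.
The left rule is the right rule for `t ↦ -f(a + b - t)`, whose third derivative is
`f'''(a + b - t)`.
-/

open Set MeasureTheory intervalIntegral Topology

structure HasDerivChainOn (f : ℕ → ℝ → ℝ) (n : ℕ) (a b : ℝ) : Prop where
  hasDerivAt : ∀ k < n, ∀ t ∈ Ioo a b, HasDerivAt (f k) (f (k + 1) t) t
  continuousOn : ∀ k ≤ n, ContinuousOn (f k) (Icc a b)

theorem ContDiffOn.hasDerivChainOn_iteratedDerivWithin {I : Set ℝ} {f : ℝ → ℝ} {n : ℕ}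
    (hf : ContDiffOn ℝ n f I) (hI : Convex ℝ I) {a b : ℝ} (ha : a ∈ I) (hb : b ∈ I)
    (hab : a < b) : HasDerivChainOn (fun k => iteratedDerivWithin k f I) n a b := by
  have hIcc : Icc a b ⊆ I := hI.ordConnected.out ha hb
  have hIoo : Ioo a b ⊆ interior I := by rw [← interior_Icc]; exact interior_mono hIcc
  have hU : UniqueDiffOn ℝ I :=
    uniqueDiffOn_convex hI ((nonempty_Ioo.2 hab).mono hIoo)
  refine ⟨fun k hk t ht => ?_, fun k hk =>
    (hf.continuousOn_iteratedDerivWithin (by exact_mod_cast hk) hU).mono hIcc⟩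
  have hI_nhds : I ∈ 𝓝 t := mem_interior_iff_mem_nhds.mp (hIoo ht)
  rw [iteratedDerivWithin_succ, derivWithin_of_mem_nhds hI_nhds]
  exact ((hf.differentiableOn_iteratedDerivWithin (by exact_mod_cast hk) hU) t
    (hIcc (Ioo_subset_Icc_self ht))).differentiableAt hI_nhds |>.hasDerivAt

namespace HasDerivChainOn

variable {f : ℕ → ℝ → ℝ} {n : ℕ} {a b : ℝ}

theorem mono (hf : HasDerivChainOn f n a b) {c d : ℝ} (hac : a ≤ c) (hdb : d ≤ b) :
    HasDerivChainOn f n c d where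
  hasDerivAt k hk t ht := hf.hasDerivAt k hk t (Ioo_subset_Ioo hac hdb ht)
  continuousOn k hk := (hf.continuousOn k hk).mono (Icc_subset_Icc hac hdb)

theorem intervalIntegrable (hf : HasDerivChainOn f n a b) (hab : a ≤ b) {k : ℕ} (hk : k ≤ n) :
    IntervalIntegrable (f k) volume a b :=
  ((hf.continuousOn k hk).mono (uIcc_of_le hab).subset).intervalIntegrable

theorem reflect (hf : HasDerivChainOn f n a b) :
    HasDerivChainOn (fun k t => (-1) ^ (k + 1) * f k (a + b - t)) n a b where
  hasDerivAt k hk t ht := by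
    have hmem : a + b - t ∈ Ioo a b := ⟨by linarith [ht.2], by linarith [ht.1]⟩
    exact (((hf.hasDerivAt k hk _ hmem).comp_const_sub (a + b) t).const_mul
      ((-1 : ℝ) ^ (k + 1))).congr_deriv (by ring)
  continuousOn k hk := continuousOn_const.mul <| (hf.continuousOn k hk).comp (by fun_prop)
    fun t ht => ⟨by linarith [ht.2], by linarith [ht.1]⟩

theorem integral_mul_add_integral_eq (hf : HasDerivChainOn f 3 a b) (hab : a ≤ b)
    {u u₁ u₂ : ℝ → ℝ} (hu : ∀ t, HasDerivAt u (u₁ t) t) (hu₁ : ∀ t, HasDerivAt u₁ (u₂ t) t)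
    (hu₂ : ∀ t, HasDerivAt u₂ 1 t) :
    (∫ t in a..b, u t * f 3 t) + ∫ t in a..b, f 0 t =
      (u b * f 2 b - u₁ b * f 1 b + u₂ b * f 0 b) -
        (u a * f 2 a - u₁ a * f 1 a + u₂ a * f 0 a) := by
  have hcont : ∀ {v v' : ℝ → ℝ}, (∀ t, HasDerivAt v (v' t) t) → Continuous v := fun h =>
    Differentiable.continuous fun t => (h t).differentiableAt
  have hu_int : IntervalIntegrable (fun t => u t * f 3 t) volume a b :=
    (hcont hu).continuousOn.mul (hf.continuousOn 3 le_rfl) |>.mono (uIcc_of_le hab).subset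
      |>.intervalIntegrable
  rw [← integral_add hu_int (hf.intervalIntegrable hab (Nat.zero_le 3))]
  refine integral_eq_sub_of_hasDeriv_right_of_le
    (f := fun t => u t * f 2 t - u₁ t * f 1 t + u₂ t * f 0 t) hab ?_ (fun t ht => ?_)
    (hu_int.add (hf.intervalIntegrable hab (Nat.zero_le 3)))
  · exact (((hcont hu).continuousOn.mul (hf.continuousOn 2 (by norm_num))).sub
      ((hcont hu₁).continuousOn.mul (hf.continuousOn 1 (by norm_num)))).add
      ((hcont hu₂).continuousOn.mul (hf.continuousOn 0 (by norm_num)))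
  · have := (((hu t).mul (hf.hasDerivAt 2 (by norm_num) t ht)).sub
      ((hu₁ t).mul (hf.hasDerivAt 1 (by norm_num) t ht))).add
      ((hu₂ t).mul (hf.hasDerivAt 0 (by norm_num) t ht))
    exact (this.congr_deriv (by ring)).hasDerivWithinAt

theorem integral_le_radau_right (hf : HasDerivChainOn f 3 a b) (hab : a ≤ b)
    (h3 : ∀ t ∈ Icc a b, 0 ≤ f 3 t) :
    ∫ t in a..b, f 0 t ≤ (b - a) * (3 / 4 * f 0 ((2 * a + b) / 3) + 1 / 4 * f 0 b) := by
  have hac : a ≤ (2 * a + b) / 3 := by linarith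
  have hcb : (2 * a + b) / 3 ≤ b := by linarith
  have hleft := (hf.mono le_rfl hcb).integral_mul_add_integral_eq hac
    (u := fun t => (t - a) ^ 3 / 6) (u₁ := fun t => (t - a) ^ 2 / 2) (u₂ := fun t => t - a)
    (fun t => (((hasDerivAt_id t).sub_const a).pow 3).div_const 6 |>.congr_deriv (by simp; ring))
    (fun t => (((hasDerivAt_id t).sub_const a).pow 2).div_const 2 |>.congr_deriv (by simp))
    (fun t => (hasDerivAt_id t).sub_const a)
  have hright := (hf.mono hac le_rfl).integral_mul_add_integral_eq hcb
    (u := fun t => (b - a) * (t - b) ^ 2 / 8 + (t - b) ^ 3 / 6)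
    (u₁ := fun t => (b - a) * (t - b) / 4 + (t - b) ^ 2 / 2)
    (u₂ := fun t => (b - a) / 4 + (t - b))
    (fun t => ((((hasDerivAt_id t).sub_const b).pow 2).const_mul (b - a) |>.div_const 8).add
      ((((hasDerivAt_id t).sub_const b).pow 3).div_const 6) |>.congr_deriv (by simp; ring))
    (fun t => ((((hasDerivAt_id t).sub_const b).const_mul (b - a)).div_const 4).add
      ((((hasDerivAt_id t).sub_const b).pow 2).div_const 2) |>.congr_deriv (by simp))
    (fun t => ((hasDerivAt_id t).sub_const b).const_add ((b - a) / 4))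
  have hKleft : 0 ≤ ∫ t in a..(2 * a + b) / 3, (t - a) ^ 3 / 6 * f 3 t :=
    integral_nonneg hac fun t ht => mul_nonneg
      (div_nonneg (pow_nonneg (sub_nonneg.2 ht.1) 3) (by norm_num)) (h3 t ⟨ht.1, ht.2.trans hcb⟩)
  have hKright : 0 ≤ ∫ t in (2 * a + b) / 3..b,
      ((b - a) * (t - b) ^ 2 / 8 + (t - b) ^ 3 / 6) * f 3 t :=
    integral_nonneg hcb fun t ht => by
      refine mul_nonneg ?_ (h3 t ⟨hac.trans ht.1, ht.2⟩)
      have hfactor : (b - a) * (t - b) ^ 2 / 8 + (t - b) ^ 3 / 6 =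
          (b - t) ^ 2 * (4 * t - b - 3 * a) / 24 := by ring
      rw [hfactor]
      exact div_nonneg (mul_nonneg (sq_nonneg _) (by linarith [ht.1])) (by norm_num)
  rw [← integral_add_adjacent_intervals
    ((hf.mono le_rfl hcb).intervalIntegrable hac (Nat.zero_le 3))
    ((hf.mono hac le_rfl).intervalIntegrable hcb (Nat.zero_le 3))]
  linear_combination hleft + hright + hKleft + hKright

theorem radau_left_le_integral (hf : HasDerivChainOn f 3 a b) (hab : a ≤ b)
    (h3 : ∀ t ∈ Icc a b, 0 ≤ f 3 t) :
    (b - a) * (1 / 4 * f 0 a + 3 / 4 * f 0 ((a + 2 * b) / 3)) ≤ ∫ t in a..b, f 0 t := by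
  have h := hf.reflect.integral_le_radau_right hab fun t ht => by
    norm_num
    exact h3 (a + b - t) ⟨by linarith [ht.2], by linarith [ht.1]⟩
  have hint : ∫ t in a..b, f 0 (a + b - t) = ∫ t in a..b, f 0 t := by
    rw [integral_comp_sub_left]; simp
  have hc : a + b - (2 * a + b) / 3 = (a + 2 * b) / 3 := by ring
  norm_num [intervalIntegral.integral_neg, hint, hc] at h
  linarith

end HasDerivChainOn

theorem radau_two_convex (I : Set ℝ) (hI : Convex ℝ I) (f : ℝ → ℝ)
    (hf : ContDiffOn ℝ 3 f I)
    (h3 : ∀ t ∈ I, 0 ≤ iteratedDerivWithin 3 f I t)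
    (x y : ℝ) (hx : x ∈ I) (hy : y ∈ I) (hxy : x < y) :
    (1 / 4) * f x + (3 / 4) * f ((x + 2 * y) / 3) ≤ (1 / (y - x)) * (∫ t in x..y, f t) ∧
    (1 / (y - x)) * (∫ t in x..y, f t) ≤ (3 / 4) * f ((2 * x + y) / 3) + (1 / 4) * f y := by
  have hchain := hf.hasDerivChainOn_iteratedDerivWithin hI hx hy hxy
  have h3' : ∀ t ∈ Icc x y, 0 ≤ iteratedDerivWithin 3 f I t :=
    fun t ht => h3 t (hI.ordConnected.out hx hy ht)
  have hleft := hchain.radau_left_le_integral hxy.le h3'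
  have hright := hchain.integral_le_radau_right hxy.le h3'
  simp only [iteratedDerivWithin_zero] at hleft hright
  have hpos : 0 < y - x := sub_pos.2 hxy
  rw [one_div_mul_eq_div (y - x)]
  exact ⟨(le_div_iff₀' hpos).2 hleft, (div_le_iff₀' hpos).2 hright⟩
end

section
/- If f : I → ℝ is 3-convex (e.g., f ∈ C⁴ with f⁽⁴⁾ ≥ 0) then for all x, y ∈ I with x < y: (1/2) f(((3+√3)/6)x + ((3−√3)/6)y) + (1/2) f(((3−√3)/6)x + ((3+√3)/6)y) ≤ (1/(y-x)) ∫ₓʸ f(t) dt ≤ (1/6) f(x) + (2/3) f((x+y)/2) + (1/6) f(y). -/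
/-!
Let `m` be the midpoint, `H` the half-length and `g h = f (m + h) + f (m - h)`, so that the mean
of `f` over `[m - H, m + H]` is that of `g` over `[0, H]`. Then `g' 0 = 0`, and
`g''' h = f''' (m + h) - f''' (m - h)` is nonnegative and monotone on `[0, H]` because `f'''` is
monotone. Each quadrature error, as a function of the half-length, vanishes at `0`; after three
differentiations in `h` its sign is read off from `g'''`, and integrating back gives both bounds.
-/

open Set MeasureTheory

section Calculus

variable {F F' : ℝ → ℝ}

theorem Convex.monotoneOn_of_hasDerivWithinAt_nonneg {D : Set ℝ} (hD : Convex ℝ D)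
    (hF : ∀ t ∈ D, HasDerivWithinAt F (F' t) D t) (hF' : ∀ t ∈ D, 0 ≤ F' t) :
    MonotoneOn F D :=
  _root_.monotoneOn_of_hasDerivWithinAt_nonneg hD (fun t ht => (hF t ht).continuousWithinAt)
    (fun t ht => (hF t (interior_subset ht)).mono interior_subset)
    (fun t ht => hF' t (interior_subset ht))

theorem nonneg_of_hasDerivWithinAt_nonneg {H h : ℝ}
    (hF : ∀ t ∈ Icc 0 H, HasDerivWithinAt F (F' t) (Icc 0 H) t) (hF' : ∀ t ∈ Icc 0 H, 0 ≤ F' t)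
    (hF0 : F 0 = 0) (hh : h ∈ Icc 0 H) : 0 ≤ F h :=
  hF0 ▸ (convex_Icc 0 H).monotoneOn_of_hasDerivWithinAt_nonneg hF hF'
    ⟨le_rfl, hh.1.trans hh.2⟩ hh hh.1

theorem mul_le_sub_of_hasDerivWithinAt_of_monotoneOn {a b : ℝ} (hab : a ≤ b)
    (hF : ∀ t ∈ Icc a b, HasDerivWithinAt F (F' t) (Icc a b) t) (hF' : MonotoneOn F' (Icc a b)) :
    (b - a) * F' a ≤ F b - F a := by
  have ha : a ∈ Icc a b := ⟨le_rfl, hab⟩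
  have hmono := (convex_Icc a b).monotoneOn_of_hasDerivWithinAt_nonneg
    (F := fun t => F t - t * F' a) (F' := fun t => F' t - F' a)
    (fun t ht => ((hF t ht).sub ((hasDerivWithinAt_id t _).mul_const (F' a))).congr_deriv
      (by ring))
    (fun t ht => sub_nonneg.2 (hF' ha ht ht.1)) ha ⟨hab, le_rfl⟩ hab
  simp only at hmono
  linarith

theorem integral_le_sub_of_hasDerivWithinAt_Icc {φ : ℝ → ℝ} {a b : ℝ} (hab : a ≤ b)
    (hF : ∀ t ∈ Icc a b, HasDerivWithinAt F (F' t) (Icc a b) t) (hφ : ContinuousOn φ (Icc a b))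
    (hφF : ∀ t ∈ Icc a b, φ t ≤ F' t) : ∫ t in a..b, φ t ≤ F b - F a :=
  intervalIntegral.integral_le_sub_of_hasDeriv_right_of_le hab
    (fun t ht => (hF t ht).continuousWithinAt)
    (fun t ht => ((hF t (Ioo_subset_Icc_self ht)).hasDerivAt
      (Icc_mem_nhds ht.1 ht.2)).hasDerivWithinAt)
    hφ.integrableOn_Icc (fun t ht => hφF t (Ioo_subset_Icc_self ht))

theorem sub_le_integral_of_hasDerivWithinAt_Icc {φ : ℝ → ℝ} {a b : ℝ} (hab : a ≤ b)
    (hF : ∀ t ∈ Icc a b, HasDerivWithinAt F (F' t) (Icc a b) t) (hφ : ContinuousOn φ (Icc a b))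
    (hFφ : ∀ t ∈ Icc a b, F' t ≤ φ t) : F b - F a ≤ ∫ t in a..b, φ t :=
  intervalIntegral.sub_le_integral_of_hasDeriv_right_of_le hab
    (fun t ht => (hF t ht).continuousWithinAt)
    (fun t ht => ((hF t (Ioo_subset_Icc_self ht)).hasDerivAt
      (Icc_mem_nhds ht.1 ht.2)).hasDerivWithinAt)
    hφ.integrableOn_Icc (fun t ht => hFφ t (Ioo_subset_Icc_self ht))

end Calculus

section EvenQuadrature

/- Simpson's rule and the two-point Gauss rule for the even function `h ↦ g |h|` on `[-H, H]`,
halved. -/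

variable {H : ℝ} {g g₁ g₂ g₃ : ℝ → ℝ}

theorem integral_le_simpson_even (hH : 0 ≤ H)
    (hg : ∀ h ∈ Icc 0 H, HasDerivWithinAt g (g₁ h) (Icc 0 H) h)
    (hg₁ : ∀ h ∈ Icc 0 H, HasDerivWithinAt g₁ (g₂ h) (Icc 0 H) h)
    (hg₂ : ∀ h ∈ Icc 0 H, HasDerivWithinAt g₂ (g₃ h) (Icc 0 H) h)
    (hg₁0 : g₁ 0 = 0) (hg₃ : ∀ h ∈ Icc 0 H, 0 ≤ g₃ h) :
    ∫ h in 0..H, g h ≤ H / 3 * (g H + 2 * g 0) := by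
  have hC : ∀ h ∈ Icc 0 H, 0 ≤ h * g₂ h - g₁ h := fun h =>
    nonneg_of_hasDerivWithinAt_nonneg (F := fun h => h * g₂ h - g₁ h) (F' := fun h => h * g₃ h)
      (fun h hh => (((hasDerivWithinAt_id h _).mul (hg₂ h hh)).sub (hg₁ h hh)).congr_deriv
        (by simp only [id]; ring))
      (fun h hh => mul_nonneg hh.1 (hg₃ h hh)) (by simp [hg₁0])
  have hB : ∀ h ∈ Icc 0 H, 0 ≤ 2 * g 0 - 2 * g h + h * g₁ h := fun h =>
    nonneg_of_hasDerivWithinAt_nonneg (F := fun h => 2 * g 0 - 2 * g h + h * g₁ h)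
      (fun h hh => (((hasDerivWithinAt_const h _ (2 * g 0)).sub ((hg h hh).const_mul 2)).add
        ((hasDerivWithinAt_id h _).mul (hg₁ h hh))).congr_deriv (by simp only [id]; ring))
      hC (by simp)
  have := integral_le_sub_of_hasDerivWithinAt_Icc hH
    (F := fun h => h / 3 * (g h + 2 * g 0))
    (F' := fun h => g h + (2 * g 0 - 2 * g h + h * g₁ h) / 3)
    (fun h hh => (((hasDerivWithinAt_id h _).div_const 3).mul
      ((hg h hh).add_const (2 * g 0))).congr_deriv (by simp only [id]; ring))
    (fun h hh => (hg h hh).continuousWithinAt)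
    (fun h hh => le_add_of_nonneg_right (div_nonneg (hB h hh) zero_le_three))
  simpa using this

theorem gauss_even_le_integral (hH : 0 ≤ H)
    (hg : ∀ h ∈ Icc 0 H, HasDerivWithinAt g (g₁ h) (Icc 0 H) h)
    (hg₁ : ∀ h ∈ Icc 0 H, HasDerivWithinAt g₁ (g₂ h) (Icc 0 H) h)
    (hg₂ : ∀ h ∈ Icc 0 H, HasDerivWithinAt g₂ (g₃ h) (Icc 0 H) h)
    (hg₁0 : g₁ 0 = 0) (hg₃ : MonotoneOn g₃ (Icc 0 H)) (hg₃0 : g₃ 0 = 0) :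
    H * g (√3 / 3 * H) ≤ ∫ h in 0..H, g h := by
  set c := √3 / 3 with hc
  have hc0 : 0 ≤ c := by positivity
  have hcc : c ^ 2 = 1 / 3 := by rw [hc, div_pow, Real.sq_sqrt zero_le_three]; norm_num
  have hc1 : c ≤ 1 := by nlinarith
  have hc3 : c + c ^ 3 ≤ 1 := by nlinarith
  have hmaps : MapsTo (c * ·) (Icc 0 H) (Icc 0 H) := fun h hh =>
    ⟨mul_nonneg hc0 hh.1, (mul_le_of_le_one_left hh.1 hc1).trans hh.2⟩
  have hscale : ∀ {φ φ' : ℝ → ℝ}, (∀ h ∈ Icc 0 H, HasDerivWithinAt φ (φ' h) (Icc 0 H) h) →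
      ∀ h ∈ Icc 0 H, HasDerivWithinAt (fun h => φ (c * h)) (φ' (c * h) * c) (Icc 0 H) h :=
    fun hφ h hh => (hφ _ (hmaps hh)).comp h
      (((hasDerivWithinAt_id h _).const_mul c).congr_deriv (mul_one c)) hmaps
  have hg₃nonneg : ∀ h ∈ Icc 0 H, 0 ≤ g₃ h := fun h hh => hg₃0 ▸ hg₃ ⟨le_rfl, hH⟩ hh hh.1
  have htangent : ∀ h ∈ Icc 0 H, (h - c * h) * g₃ (c * h) ≤ g₂ h - g₂ (c * h) := by
    intro h hh
    have hsub : Icc (c * h) h ⊆ Icc 0 H := Icc_subset_Icc (hmaps hh).1 hh.2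
    exact mul_le_sub_of_hasDerivWithinAt_of_monotoneOn (mul_le_of_le_one_left hh.1 hc1)
      (fun t ht => (hg₂ t (hsub ht)).mono hsub) (hg₃.mono hsub)
  -- `3 c² = 1` cancels the `g₂ (c h)` terms of `F'`, and `c + c³ ≤ 1` with the tangent bound
  -- leaves a nonnegative multiple of `g₃ (c h)`.
  have hF : ∀ h ∈ Icc 0 H, 0 ≤ g₁ h - 2 * c * g₁ (c * h) - c ^ 2 * (h * g₂ (c * h)) := fun h =>
    nonneg_of_hasDerivWithinAt_nonneg
      (F := fun h => g₁ h - 2 * c * g₁ (c * h) - c ^ 2 * (h * g₂ (c * h)))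
      (F' := fun h => g₂ h - g₂ (c * h) - c ^ 3 * h * g₃ (c * h))
      (fun h hh => (((hg₁ h hh).sub ((hscale hg₁ h hh).const_mul (2 * c))).sub
        (((hasDerivWithinAt_id h _).mul (hscale hg₂ h hh)).const_mul (c ^ 2))).congr_deriv
        (by simp only [id]; linear_combination (-3 * g₂ (c * h)) * hcc))
      (fun h hh => by
        nlinarith [htangent h hh, mul_nonneg (mul_nonneg (sub_nonneg.2 hc3) hh.1)
          (hg₃nonneg _ (hmaps hh))])
      (by simp [hg₁0])
  have hE : ∀ h ∈ Icc 0 H, 0 ≤ g h - g (c * h) - c * h * g₁ (c * h) := fun h =>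
    nonneg_of_hasDerivWithinAt_nonneg
      (F := fun h => g h - g (c * h) - c * h * g₁ (c * h))
      (fun h hh => (((hg h hh).sub (hscale hg h hh)).sub
        (((hasDerivWithinAt_id h _).const_mul c).mul (hscale hg₁ h hh))).congr_deriv
        (by simp only [id]; ring))
      hF (by simp)
  have := sub_le_integral_of_hasDerivWithinAt_Icc hH (F := fun h => h * g (c * h))
    (fun h hh => (hasDerivWithinAt_id h _).mul (hscale hg h hh))
    (fun h hh => (hg h hh).continuousWithinAt)
    (fun h hh => by simp only [id]; linarith [hE h hh])
  simpa using this

end EvenQuadrature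

section Reflection

variable {φ φ' : ℝ → ℝ} {m H h : ℝ}

theorem add_mem_Icc_sub_add (hh : h ∈ Icc 0 H) : m + h ∈ Icc (m - H) (m + H) :=
  ⟨by linarith [hh.1, hh.2], by linarith [hh.2]⟩

theorem sub_mem_Icc_sub_add (hh : h ∈ Icc 0 H) : m - h ∈ Icc (m - H) (m + H) :=
  ⟨by linarith [hh.2], by linarith [hh.1, hh.2]⟩

theorem hasDerivWithinAt_comp_add_Icc
    (hφ : ∀ t ∈ Icc (m - H) (m + H), HasDerivWithinAt φ (φ' t) (Icc (m - H) (m + H)) t)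
    (hh : h ∈ Icc 0 H) : HasDerivWithinAt (fun h => φ (m + h)) (φ' (m + h)) (Icc 0 H) h :=
  ((hφ _ (add_mem_Icc_sub_add hh)).comp h ((hasDerivWithinAt_id h _).const_add m)
    fun _ => add_mem_Icc_sub_add).congr_deriv (mul_one _)

theorem hasDerivWithinAt_comp_sub_Icc
    (hφ : ∀ t ∈ Icc (m - H) (m + H), HasDerivWithinAt φ (φ' t) (Icc (m - H) (m + H)) t)
    (hh : h ∈ Icc 0 H) : HasDerivWithinAt (fun h => φ (m - h)) (-φ' (m - h)) (Icc 0 H) h :=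
  ((hφ _ (sub_mem_Icc_sub_add hh)).comp h ((hasDerivWithinAt_id h _).const_sub m)
    fun _ => sub_mem_Icc_sub_add).congr_deriv (mul_neg_one _)

theorem integral_sub_add_eq_integral_reflect (hH : 0 ≤ H)
    (hφ : ContinuousOn φ (Icc (m - H) (m + H))) :
    ∫ t in (m - H)..(m + H), φ t = ∫ h in 0..H, (φ (m + h) + φ (m - h)) := by
  have hplus : ContinuousOn (fun h => φ (m + h)) (Icc 0 H) :=
    hφ.comp (by fun_prop) fun _ => add_mem_Icc_sub_add
  have hminus : ContinuousOn (fun h => φ (m - h)) (Icc 0 H) :=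
    hφ.comp (by fun_prop) fun _ => sub_mem_Icc_sub_add
  rw [intervalIntegral.integral_add (hplus.intervalIntegrable_of_Icc hH)
      (hminus.intervalIntegrable_of_Icc hH),
    intervalIntegral.integral_comp_add_left, intervalIntegral.integral_comp_sub_left,
    add_zero, sub_zero, add_comm (∫ t in m..m + H, φ t),
    intervalIntegral.integral_add_adjacent_intervals
      ((hφ.mono (Icc_subset_Icc le_rfl (by linarith))).intervalIntegrable_of_Icc (by linarith))
      ((hφ.mono (Icc_subset_Icc (by linarith) le_rfl)).intervalIntegrable_of_Icc (by linarith))]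

end Reflection

theorem gauss_le_integral_le_simpson_of_monotoneOn {f f₁ f₂ f₃ : ℝ → ℝ} {m H : ℝ} (hH : 0 ≤ H)
    (hf : ∀ t ∈ Icc (m - H) (m + H), HasDerivWithinAt f (f₁ t) (Icc (m - H) (m + H)) t)
    (hf₁ : ∀ t ∈ Icc (m - H) (m + H), HasDerivWithinAt f₁ (f₂ t) (Icc (m - H) (m + H)) t)
    (hf₂ : ∀ t ∈ Icc (m - H) (m + H), HasDerivWithinAt f₂ (f₃ t) (Icc (m - H) (m + H)) t)
    (hf₃ : MonotoneOn f₃ (Icc (m - H) (m + H))) :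
    H * (f (m + √3 / 3 * H) + f (m - √3 / 3 * H)) ≤ ∫ t in (m - H)..(m + H), f t ∧
      ∫ t in (m - H)..(m + H), f t ≤ H / 3 * (f (m + H) + f (m - H) + 4 * f m) := by
  have hg : ∀ h ∈ Icc 0 H, HasDerivWithinAt (fun h => f (m + h) + f (m - h))
      (f₁ (m + h) - f₁ (m - h)) (Icc 0 H) h := fun h hh =>
    ((hasDerivWithinAt_comp_add_Icc hf hh).add (hasDerivWithinAt_comp_sub_Icc hf hh)).congr_deriv
      (sub_eq_add_neg _ _).symm
  have hg₁ : ∀ h ∈ Icc 0 H, HasDerivWithinAt (fun h => f₁ (m + h) - f₁ (m - h))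
      (f₂ (m + h) + f₂ (m - h)) (Icc 0 H) h := fun h hh =>
    ((hasDerivWithinAt_comp_add_Icc hf₁ hh).sub (hasDerivWithinAt_comp_sub_Icc hf₁ hh)).congr_deriv
      (sub_neg_eq_add _ _)
  have hg₂ : ∀ h ∈ Icc 0 H, HasDerivWithinAt (fun h => f₂ (m + h) + f₂ (m - h))
      (f₃ (m + h) - f₃ (m - h)) (Icc 0 H) h := fun h hh =>
    ((hasDerivWithinAt_comp_add_Icc hf₂ hh).add (hasDerivWithinAt_comp_sub_Icc hf₂ hh)).congr_deriv
      (sub_eq_add_neg _ _).symm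
  have hg₃ : MonotoneOn (fun h => f₃ (m + h) - f₃ (m - h)) (Icc 0 H) := fun a ha b hb hab =>
    sub_le_sub (hf₃ (add_mem_Icc_sub_add ha) (add_mem_Icc_sub_add hb) (by linarith))
      (hf₃ (sub_mem_Icc_sub_add hb) (sub_mem_Icc_sub_add ha) (by linarith))
  rw [integral_sub_add_eq_integral_reflect hH fun t ht => (hf t ht).continuousWithinAt]
  constructor
  · simpa using gauss_even_le_integral hH hg hg₁ hg₂ (by simp) hg₃ (by simp)
  · have := integral_le_simpson_even hH hg hg₁ hg₂ (by simp)
      fun h hh => by simpa using hg₃ ⟨le_rfl, hH⟩ hh hh.1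
    simp only [add_zero, sub_zero] at this
    linarith

theorem ContDiffOn.hasDerivWithinAt_iteratedDerivWithin {s : Set ℝ} {f : ℝ → ℝ} {n : WithTop ℕ∞}
    {k : ℕ} {t : ℝ} (hf : ContDiffOn ℝ n f s) (hk : k < n) (hs : UniqueDiffOn ℝ s) (ht : t ∈ s) :
    HasDerivWithinAt (iteratedDerivWithin k f s) (iteratedDerivWithin (k + 1) f s t) s t := by
  rw [iteratedDerivWithin_succ]
  exact (hf.differentiableOn_iteratedDerivWithin hk hs t ht).hasDerivWithinAt

theorem gauss2_lobatto3_three_convex (I : Set ℝ) (hI : Convex ℝ I) (f : ℝ → ℝ)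
    (hf : ContDiffOn ℝ 4 f I)
    (h4 : ∀ t ∈ I, 0 ≤ iteratedDerivWithin 4 f I t)
    (x y : ℝ) (hx : x ∈ I) (hy : y ∈ I) (hxy : x < y) :
    (1 / 2) * f (((3 + Real.sqrt 3) / 6) * x + ((3 - Real.sqrt 3) / 6) * y) +
      (1 / 2) * f (((3 - Real.sqrt 3) / 6) * x + ((3 + Real.sqrt 3) / 6) * y) ≤
      (1 / (y - x)) * (∫ t in x..y, f t) ∧
    (1 / (y - x)) * (∫ t in x..y, f t) ≤
      (1 / 6) * f x + (2 / 3) * f ((x + y) / 2) + (1 / 6) * f y := by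
  have hxyI : Icc x y ⊆ I := hI.ordConnected.out hx hy
  have hU : UniqueDiffOn ℝ I := uniqueDiffOn_convex hI
    ⟨(x + y) / 2, interior_mono hxyI (by rw [interior_Icc]; constructor <;> linarith)⟩
  have hd : ∀ k : ℕ, (k : WithTop ℕ∞) < 4 → ∀ t ∈ Icc x y, HasDerivWithinAt
      (iteratedDerivWithin k f I) (iteratedDerivWithin (k + 1) f I t) (Icc x y) t :=
    fun k hk t ht =>
    (hf.hasDerivWithinAt_iteratedDerivWithin hk hU (hxyI ht)).mono hxyI
  have hf₃ : MonotoneOn (iteratedDerivWithin 3 f I) I :=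
    hI.monotoneOn_of_hasDerivWithinAt_nonneg
      (fun t ht => hf.hasDerivWithinAt_iteratedDerivWithin (by norm_num) hU ht) h4
  obtain ⟨m, H, rfl, rfl⟩ : ∃ m H, x = m - H ∧ y = m + H :=
    ⟨(x + y) / 2, (y - x) / 2, by ring, by ring⟩
  have hH : 0 < H := by linarith
  obtain ⟨hgauss, hsimpson⟩ := gauss_le_integral_le_simpson_of_monotoneOn hH.le
    (iteratedDerivWithin_zero (f := f) ▸ hd 0 (by norm_num)) (hd 1 (by norm_num))
    (hd 2 (by norm_num)) (hf₃.mono hxyI)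
  rw [show (m + H - (m - H)) = 2 * H by ring, show (m - H + (m + H)) / 2 = m by ring,
    show (3 + √3) / 6 * (m - H) + (3 - √3) / 6 * (m + H) = m - √3 / 3 * H by ring,
    show (3 - √3) / 6 * (m - H) + (3 + √3) / 6 * (m + H) = m + √3 / 3 * H by ring]
  rw [one_div_mul_eq_div (2 * H), le_div_iff₀ (by positivity), div_le_iff₀ (by positivity)]
  constructor <;> linarith
end

section
/- If f : I → ℝ is 5-convex (e.g., f ∈ C⁶ with f⁽⁶⁾ ≥ 0) then for all x < y in I: (5/18) f(((5+√15)/10)x + ((5−√15)/10)y) + (4/9) f((x+y)/2) + (5/18) f(((5−√15)/10)x + ((5+√15)/10)y) ≤ (1/(y-x)) ∫ₓʸ f(t) dt ≤ (1/12) f(x) + (5/12) f(((5+√5)/10)x + ((5−√5)/10)y) + (5/12) f(((5−√5)/10)x + ((5+√5)/10)y) + (1/12) f(y). -/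
/-!
Both rules integrate polynomials of degree at most five exactly, so by Peano's kernel theorem
their error against `∫ₓʸ f` is `(1 / 5!) ∫ₓʸ K(t) f⁽⁶⁾(t) dt` with
`K(t) = (y - t)⁶ / 6 - ∑ᵢ wᵢ (zᵢ - t)₊⁵`. After rescaling to `[0, 1]` the kernel is a piecewise
polynomial which is nonnegative for the Gauss–Legendre rule and nonpositive for the Lobatto rule.
On the outer pieces this is immediate; on the middle pieces of the Gauss kernel it is a weighted
AM–GM inequality, with very little room to spare.
-/

open Set MeasureTheory intervalIntegral
open scoped Nat

noncomputable section

section PeanoKernel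

variable {ι : Type*} [Fintype ι]

/-- The Peano kernel on `[a, b]` of the rule `∑ i, w i * g (z i)` exact in degree `n`.
It does not involve `a`, since `(b - t) ^ (n + 1) / (n + 1) = ∫ z in a..b, max (z - t) 0 ^ n` for
`t ∈ [a, b]`. For `n = 0` the truncated power `max (z - t) 0 ^ 0 = 1` is not the Heaviside
function, whence the hypotheses `n ≠ 0` below. -/
def peanoKernel (n : ℕ) (b : ℝ) (z w : ι → ℝ) (t : ℝ) : ℝ :=
  (b - t) ^ (n + 1) / (n + 1) - ∑ i, w i * max (z i - t) 0 ^ n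

lemma integral_max_sub_pow {a b t : ℝ} {n : ℕ} (hn : n ≠ 0) (ht : t ∈ Icc a b) :
    ∫ z in a..b, max (z - t) 0 ^ n = (b - t) ^ (n + 1) / (n + 1) := by
  have hint : ∀ c d, IntervalIntegrable (fun z => max (z - t) 0 ^ n) volume c d :=
    fun c d => (by fun_prop : Continuous fun z => max (z - t) 0 ^ n).intervalIntegrable c d
  have below : ∫ z in a..t, max (z - t) 0 ^ n = 0 := by
    rw [integral_congr (g := fun _ => 0)]
    · simp
    intro z hz
    rw [uIcc_of_le ht.1] at hz
    simp [max_eq_right (sub_nonpos.2 hz.2), hn]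
  have above : ∫ z in t..b, max (z - t) 0 ^ n = (b - t) ^ (n + 1) / (n + 1) := by
    rw [integral_congr (g := fun z => (z - t) ^ n)]
    · simp [integral_comp_sub_right (fun z => z ^ n), integral_pow]
    intro z hz
    rw [uIcc_of_le ht.2] at hz
    simp [max_eq_left (sub_nonneg.2 hz.1)]
  rw [← integral_add_adjacent_intervals (hint a t) (hint t b), below, above, zero_add]

lemma taylor_integral_remainder_Icc {f : ℝ → ℝ} {a b z : ℝ} {n : ℕ} (hab : a < b)
    (hf : ContDiffOn ℝ (n + 1) f (Icc a b)) (hz : z ∈ Icc a b) :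
    f z - taylorWithinEval f n (Icc a b) a z =
      ∫ t in a..z, (n ! : ℝ)⁻¹ * (z - t) ^ n * iteratedDerivWithin (n + 1) f (Icc a b) t := by
  have hU : UniqueDiffOn ℝ (Icc a b) := uniqueDiffOn_Icc hab
  have hsub : Icc a z ⊆ Icc a b := Icc_subset_Icc le_rfl hz.2
  rcases hz.1.eq_or_lt with rfl | haz
  · simp [taylorWithinEval_self]
  rw [← taylorWithinEval_self f n (Icc a b) z, eq_comm]
  apply integral_eq_sub_of_hasDeriv_right_of_le (f := fun t => taylorWithinEval f n (Icc a b) t z)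
    haz.le
  · exact (continuousOn_taylorWithinEval hU (hf.of_le le_self_add)).mono hsub
  · intro t ht
    have hderiv := taylorWithinEval_hasDerivAt_Ioo (n := n) z hab ⟨ht.1, ht.2.trans_le hz.2⟩
      (hf.of_le le_self_add)
      ((hf.differentiableOn_iteratedDerivWithin (by norm_cast; omega) hU).mono Ioo_subset_Icc_self)
    simpa only [smul_eq_mul] using hderiv.hasDerivWithinAt
  · rw [← uIcc_of_le haz.le] at hsub
    exact ((by fun_prop : Continuous fun t => (n ! : ℝ)⁻¹ * (z - t) ^ n).continuousOn.mul
      ((hf.continuousOn_iteratedDerivWithin le_rfl hU).mono hsub)).intervalIntegrable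

lemma taylor_integral_remainder_max_sub_pow {f : ℝ → ℝ} {a b z : ℝ} {n : ℕ} (hn : n ≠ 0)
    (hab : a < b) (hf : ContDiffOn ℝ (n + 1) f (Icc a b)) (hz : z ∈ Icc a b) :
    f z - taylorWithinEval f n (Icc a b) a z =
      (n ! : ℝ)⁻¹ * ∫ t in a..b, max (z - t) 0 ^ n * iteratedDerivWithin (n + 1) f (Icc a b) t := by
  set g := iteratedDerivWithin (n + 1) f (Icc a b)
  have hg : ContinuousOn g (Icc a b) :=
    hf.continuousOn_iteratedDerivWithin le_rfl (uniqueDiffOn_Icc hab)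
  have hint : ∀ c d, Icc c d ⊆ Icc a b → c ≤ d →
      IntervalIntegrable (fun t => max (z - t) 0 ^ n * g t) volume c d := fun c d hcd h =>
    ((by fun_prop : Continuous fun t => max (z - t) 0 ^ n).continuousOn.mul
      (hg.mono hcd)).intervalIntegrable_of_Icc h
  have below : ∫ t in a..z, max (z - t) 0 ^ n * g t = ∫ t in a..z, (z - t) ^ n * g t := by
    refine integral_congr fun t ht => ?_
    rw [uIcc_of_le hz.1] at ht
    simp [max_eq_left (sub_nonneg.2 ht.2)]
  have above : ∫ t in z..b, max (z - t) 0 ^ n * g t = 0 := by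
    rw [integral_congr (g := fun _ => 0)]
    · simp
    intro t ht
    rw [uIcc_of_le hz.2] at ht
    simp [max_eq_right (sub_nonpos.2 ht.1), hn]
  rw [taylor_integral_remainder_Icc hab hf hz,
    ← integral_add_adjacent_intervals (hint a z (Icc_subset_Icc le_rfl hz.2) hz.1)
      (hint z b (Icc_subset_Icc hz.1 le_rfl) hz.2), below, above, add_zero,
    ← intervalIntegral.integral_const_mul]
  simp only [g, mul_assoc]

lemma integral_integral_max_sub_pow_mul {g : ℝ → ℝ} {a b : ℝ} {n : ℕ} (hn : n ≠ 0) (hab : a ≤ b)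
    (hg : ContinuousOn g (Icc a b)) :
    ∫ z in a..b, ∫ t in a..b, max (z - t) 0 ^ n * g t =
      ∫ t in a..b, (b - t) ^ (n + 1) / (n + 1) * g t := by
  have hprod : Integrable (Function.uncurry fun z t => max (z - t) 0 ^ n * g t)
      ((volume.restrict (Ioc a b)).prod (volume.restrict (Ioc a b))) := by
    rw [Measure.prod_restrict]
    refine (ContinuousOn.integrableOn_compact (isCompact_Icc.prod isCompact_Icc) ?_).mono_set
      (prod_mono Ioc_subset_Icc_self Ioc_subset_Icc_self)
    exact (by fun_prop : Continuous fun p : ℝ × ℝ => max (p.1 - p.2) 0 ^ n).continuousOn.mul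
      (hg.comp continuous_snd.continuousOn fun p hp => hp.2)
  simp only [integral_of_le hab]
  rw [integral_integral_swap hprod]
  refine setIntegral_congr_fun measurableSet_Ioc fun t ht => ?_
  rw [MeasureTheory.integral_mul_const, ← integral_of_le hab,
    integral_max_sub_pow hn (Ioc_subset_Icc_self ht)]

lemma integral_taylorWithinEval_eq_sum {f : ℝ → ℝ} {s : Set ℝ} {a b : ℝ} {n : ℕ} {z w : ι → ℝ}
    (hexact : ∀ k ≤ n, ∑ i, w i * (z i - a) ^ k = (b - a) ^ (k + 1) / (k + 1)) :
    ∫ x in a..b, taylorWithinEval f n s a x = ∑ i, w i * taylorWithinEval f n s a (z i) := by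
  simp only [taylor_within_apply, smul_eq_mul, Finset.mul_sum]
  rw [Finset.sum_comm, intervalIntegral.integral_finsetSum fun k _ => by
    apply Continuous.intervalIntegrable; fun_prop]
  refine Finset.sum_congr rfl fun k hk => ?_
  have hmoment := hexact k (Nat.lt_succ_iff.1 (Finset.mem_range.1 hk))
  simp only [intervalIntegral.integral_mul_const, intervalIntegral.integral_const_mul,
    integral_comp_sub_right (fun x => x ^ k), integral_pow, sub_self, ne_eq,
    Nat.succ_ne_zero, not_false_eq_true, zero_pow, sub_zero]
  rw [← hmoment, Finset.mul_sum, Finset.sum_mul]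
  exact Finset.sum_congr rfl fun i _ => by ring

theorem integral_sub_sum_eq_integral_peanoKernel {f : ℝ → ℝ} {a b : ℝ} {n : ℕ} {z w : ι → ℝ}
    (hn : n ≠ 0) (hab : a < b) (hf : ContDiffOn ℝ (n + 1) f (Icc a b)) (hz : ∀ i, z i ∈ Icc a b)
    (hexact : ∀ k ≤ n, ∑ i, w i * (z i - a) ^ k = (b - a) ^ (k + 1) / (k + 1)) :
    (∫ t in a..b, f t) - ∑ i, w i * f (z i) =
      (n ! : ℝ)⁻¹ *
        ∫ t in a..b, peanoKernel n b z w t * iteratedDerivWithin (n + 1) f (Icc a b) t := by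
  set g := iteratedDerivWithin (n + 1) f (Icc a b)
  set P := taylorWithinEval f n (Icc a b) a
  set R := fun x => ∫ t in a..b, max (x - t) 0 ^ n * g t
  have hg : ContinuousOn g (Icc a b) :=
    hf.continuousOn_iteratedDerivWithin le_rfl (uniqueDiffOn_Icc hab)
  have hcont : ∀ x, ContinuousOn (fun t => max (x - t) 0 ^ n * g t) (Icc a b) := fun x =>
    (by fun_prop : Continuous fun t => max (x - t) 0 ^ n).continuousOn.mul hg
  have hP : Continuous P := by
    simp only [P, funext (taylor_within_apply f n (Icc a b) a)]
    fun_prop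
  have hrep : ∀ x ∈ Icc a b, f x - P x = (n ! : ℝ)⁻¹ * R x := fun x hx =>
    taylor_integral_remainder_max_sub_pow hn hab hf hx
  have hintegral : (∫ t in a..b, f t) - ∑ i, w i * P (z i) = (n ! : ℝ)⁻¹ * ∫ t in a..b, R t := by
    rw [← integral_taylorWithinEval_eq_sum hexact, ← intervalIntegral.integral_sub
      (hf.continuousOn.intervalIntegrable_of_Icc hab.le) (hP.intervalIntegrable a b),
      ← intervalIntegral.integral_const_mul]
    refine integral_congr fun x hx => hrep x ?_
    rwa [uIcc_of_le hab.le] at hx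
  have hsum : ∑ i, w i * f (z i) - ∑ i, w i * P (z i) = (n ! : ℝ)⁻¹ * ∑ i, w i * R (z i) := by
    rw [← Finset.sum_sub_distrib, Finset.mul_sum]
    refine Finset.sum_congr rfl fun i _ => ?_
    rw [← mul_sub, hrep (z i) (hz i)]
    ring
  have hkernel : ∫ t in a..b, peanoKernel n b z w t * g t =
      (∫ t in a..b, R t) - ∑ i, w i * R (z i) := by
    have hsplit : ∀ t, peanoKernel n b z w t * g t =
        (b - t) ^ (n + 1) / (n + 1) * g t - ∑ i, w i * (max (z i - t) 0 ^ n * g t) := fun t => by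
      simp only [peanoKernel, sub_mul, Finset.sum_mul, mul_assoc]
    simp only [hsplit, R, integral_integral_max_sub_pow_mul hn hab.le hg]
    rw [intervalIntegral.integral_sub, intervalIntegral.integral_finsetSum]
    · simp only [intervalIntegral.integral_const_mul]
    · exact fun i _ => ((hcont (z i)).intervalIntegrable_of_Icc hab.le).const_mul (w i)
    · exact ((by fun_prop : Continuous fun t => (b - t) ^ (n + 1) / (n + 1)).continuousOn.mul
        hg).intervalIntegrable_of_Icc hab.le
    · exact (continuousOn_finsetSum _ fun i _ =>
        continuousOn_const.mul (hcont (z i))).intervalIntegrable_of_Icc hab.le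
  rw [hkernel]
  linear_combination hintegral - hsum

lemma peanoKernel_affine {a b : ℝ} (hab : a < b) (n : ℕ) (c ω : ι → ℝ) (t : ℝ) :
    peanoKernel n b (fun i => a + (b - a) * c i) (fun i => (b - a) * ω i) t =
      (b - a) ^ (n + 1) * peanoKernel n 1 c ω ((t - a) / (b - a)) := by
  have hd : 0 < b - a := sub_pos.2 hab
  set u := (t - a) / (b - a)
  have ht : t = a + (b - a) * u := by
    simp only [u]
    field_simp
    ring
  have hmax : ∀ i, max (a + (b - a) * c i - t) 0 = (b - a) * max (c i - u) 0 := fun i => by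
    rw [mul_max_of_nonneg _ _ hd.le, mul_zero, ht]
    ring_nf
  have hb : b - t = (b - a) * (1 - u) := by rw [ht]; ring
  simp only [peanoKernel, hmax, hb, mul_pow]
  rw [mul_sub, Finset.mul_sum]
  congr 1
  · ring
  · exact Finset.sum_congr rfl fun i _ => by ring

lemma sub_div_sub_mem_Icc_zero_one {a b t : ℝ} (hab : a < b) (ht : t ∈ Icc a b) :
    (t - a) / (b - a) ∈ Icc 0 1 :=
  ⟨div_nonneg (sub_nonneg.2 ht.1) (sub_pos.2 hab).le,
    (div_le_one (sub_pos.2 hab)).2 (sub_le_sub_right ht.2 a)⟩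

theorem integral_sub_sum_affine_eq {f : ℝ → ℝ} {a b : ℝ} {n : ℕ} {c ω : ι → ℝ}
    (hn : n ≠ 0) (hab : a < b) (hf : ContDiffOn ℝ (n + 1) f (Icc a b)) (hc : ∀ i, c i ∈ Icc 0 1)
    (hexact : ∀ k ≤ n, ∑ i, ω i * c i ^ k = 1 / (k + 1)) :
    (∫ t in a..b, f t) - (b - a) * ∑ i, ω i * f (a + (b - a) * c i) =
      (n ! : ℝ)⁻¹ * (b - a) ^ (n + 1) * ∫ t in a..b,
        peanoKernel n 1 c ω ((t - a) / (b - a)) * iteratedDerivWithin (n + 1) f (Icc a b) t := by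
  have hz : ∀ i, a + (b - a) * c i ∈ Icc a b := fun i =>
    ⟨by nlinarith [(hc i).1], by nlinarith [(hc i).2]⟩
  have hexact' : ∀ k ≤ n, ∑ i, (b - a) * ω i * (a + (b - a) * c i - a) ^ k =
      (b - a) ^ (k + 1) / (k + 1) := fun k hk =>
    calc ∑ i, (b - a) * ω i * (a + (b - a) * c i - a) ^ k
        = (b - a) ^ (k + 1) * ∑ i, ω i * c i ^ k := by
          rw [Finset.mul_sum]
          exact Finset.sum_congr rfl fun i _ => by rw [add_sub_cancel_left, mul_pow]; ring
      _ = (b - a) ^ (k + 1) / (k + 1) := by rw [hexact k hk]; ring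
  rw [Finset.mul_sum, mul_assoc, ← intervalIntegral.integral_const_mul]
  simp only [← mul_assoc, ← peanoKernel_affine hab]
  exact integral_sub_sum_eq_integral_peanoKernel hn hab hf hz hexact'

theorem sum_affine_le_integral_of_peanoKernel_nonneg {f : ℝ → ℝ} {a b : ℝ} {n : ℕ}
    {c ω : ι → ℝ} (hn : n ≠ 0) (hab : a < b) (hf : ContDiffOn ℝ (n + 1) f (Icc a b))
    (hc : ∀ i, c i ∈ Icc 0 1) (hexact : ∀ k ≤ n, ∑ i, ω i * c i ^ k = 1 / (k + 1))
    (hK : ∀ u ∈ Icc 0 1, 0 ≤ peanoKernel n 1 c ω u)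
    (hg : ∀ t ∈ Icc a b, 0 ≤ iteratedDerivWithin (n + 1) f (Icc a b) t) :
    (b - a) * ∑ i, ω i * f (a + (b - a) * c i) ≤ ∫ t in a..b, f t := by
  have hI := integral_nonneg (μ := volume) hab.le fun t ht =>
    mul_nonneg (hK _ (sub_div_sub_mem_Icc_zero_one hab ht)) (hg t ht)
  have hcoef : 0 ≤ (n ! : ℝ)⁻¹ * (b - a) ^ (n + 1) := by
    have := sub_pos.2 hab
    positivity
  linarith [integral_sub_sum_affine_eq hn hab hf hc hexact, mul_nonneg hcoef hI]

theorem integral_le_sum_affine_of_peanoKernel_nonpos {f : ℝ → ℝ} {a b : ℝ} {n : ℕ}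
    {c ω : ι → ℝ} (hn : n ≠ 0) (hab : a < b) (hf : ContDiffOn ℝ (n + 1) f (Icc a b))
    (hc : ∀ i, c i ∈ Icc 0 1) (hexact : ∀ k ≤ n, ∑ i, ω i * c i ^ k = 1 / (k + 1))
    (hK : ∀ u ∈ Icc 0 1, peanoKernel n 1 c ω u ≤ 0)
    (hg : ∀ t ∈ Icc a b, 0 ≤ iteratedDerivWithin (n + 1) f (Icc a b) t) :
    ∫ t in a..b, f t ≤ (b - a) * ∑ i, ω i * f (a + (b - a) * c i) := by
  have hI := integral_nonneg (μ := volume) hab.le fun t ht =>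
    mul_nonneg (neg_nonneg.2 (hK _ (sub_div_sub_mem_Icc_zero_one hab ht))) (hg t ht)
  simp only [neg_mul, intervalIntegral.integral_neg, neg_nonneg] at hI
  have hcoef : 0 ≤ (n ! : ℝ)⁻¹ * (b - a) ^ (n + 1) := by
    have := sub_pos.2 hab
    positivity
  linarith [integral_sub_sum_affine_eq hn hab hf hc hexact, mul_nonpos_of_nonneg_of_nonpos hcoef hI]

end PeanoKernel

lemma iteratedDerivWithin_Icc_eq {f : ℝ → ℝ} {s : Set ℝ} {a b t : ℝ} {n : ℕ} (hs : Convex ℝ s)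
    (hf : ContDiffOn ℝ n f s) (hab : a < b) (hsub : Icc a b ⊆ s) (ht : t ∈ Icc a b) :
    iteratedDerivWithin n f (Icc a b) t = iteratedDerivWithin n f s t := by
  have hmid : (a + b) / 2 ∈ interior s :=
    interior_mono hsub (by rw [interior_Icc]; constructor <;> linarith)
  simp only [iteratedDerivWithin_eq_iteratedFDerivWithin, iteratedFDerivWithin_subset hsub
    (uniqueDiffOn_Icc hab) (uniqueDiffOn_convex hs ⟨_, hmid⟩) hf ht]

/-- Weighted AM–GM for five copies of `w / 5` and one of `c`. -/
lemma pow_five_mul_le_pow_six {w c : ℝ} (hw : 0 ≤ w) (hc : 0 ≤ c) :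
    6 ^ 6 * c * w ^ 5 ≤ 5 ^ 5 * (w + c) ^ 6 := by
  have hQ : 0 ≤ 3125 * w ^ 4 + 3344 * w ^ 3 * c + 2190 * w ^ 2 * c ^ 2 + 800 * w * c ^ 3 +
      125 * c ^ 4 := by positivity
  nlinarith [mul_nonneg (sq_nonneg (w - 5 * c)) hQ]

/- Nodes and weights of the two rules on `[0, 1]`. -/

def gaussLegendre3Nodes : Fin 3 → ℝ := ![(5 - √15) / 10, 1 / 2, (5 + √15) / 10]

def gaussLegendre3Weights : Fin 3 → ℝ := ![5 / 18, 4 / 9, 5 / 18]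

def lobatto4Nodes : Fin 4 → ℝ := ![0, (5 - √5) / 10, (5 + √5) / 10, 1]

def lobatto4Weights : Fin 4 → ℝ := ![1 / 12, 5 / 12, 5 / 12, 1 / 12]

lemma sqrt15_bounds : 3.87 < √15 ∧ √15 < 3.873 := by
  constructor
  · rw [Real.lt_sqrt (by norm_num)]; norm_num
  · rw [Real.sqrt_lt' (by norm_num)]; norm_num

lemma sqrt5_bounds : 2.23 < √5 ∧ √5 < 2.24 := by
  constructor
  · rw [Real.lt_sqrt (by norm_num)]; norm_num
  · rw [Real.sqrt_lt' (by norm_num)]; norm_num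

lemma gaussLegendre3Nodes_mem (i : Fin 3) : gaussLegendre3Nodes i ∈ Icc 0 1 := by
  obtain ⟨hlo, hhi⟩ := sqrt15_bounds
  fin_cases i <;> simp [gaussLegendre3Nodes] <;> (try constructor) <;> linarith

lemma lobatto4Nodes_mem (i : Fin 4) : lobatto4Nodes i ∈ Icc 0 1 := by
  obtain ⟨hlo, hhi⟩ := sqrt5_bounds
  fin_cases i <;> simp [lobatto4Nodes] <;> (try constructor) <;> linarith

lemma gaussLegendre3_exact : ∀ k : ℕ, k ≤ 5 →
    ∑ i, gaussLegendre3Weights i * gaussLegendre3Nodes i ^ k = 1 / (k + 1) := by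
  have hs : √15 ^ 2 = 15 := Real.sq_sqrt (by norm_num)
  intro k hk
  interval_cases k <;> simp [Fin.sum_univ_three, gaussLegendre3Weights, gaussLegendre3Nodes]
  · norm_num
  · ring
  · linear_combination (1 / 180 : ℝ) * hs
  · linear_combination (1 / 120 : ℝ) * hs
  · linear_combination (11 / 1200 + √15 ^ 2 / 18000 : ℝ) * hs
  · linear_combination (13 / 1440 + √15 ^ 2 / 7200 : ℝ) * hs

lemma lobatto4_exact : ∀ k : ℕ, k ≤ 5 →
    ∑ i, lobatto4Weights i * lobatto4Nodes i ^ k = 1 / (k + 1) := by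
  have hs : √5 ^ 2 = 5 := Real.sq_sqrt (by norm_num)
  intro k hk
  interval_cases k <;> simp [Fin.sum_univ_four, lobatto4Weights, lobatto4Nodes]
  · norm_num
  · ring
  · linear_combination (1 / 120 : ℝ) * hs
  · linear_combination (1 / 80 : ℝ) * hs
  · linear_combination (31 / 2400 + √5 ^ 2 / 12000 : ℝ) * hs
  · linear_combination (11 / 960 + √5 ^ 2 / 4800 : ℝ) * hs

lemma gaussLegendre3_peanoKernel_nonneg {u : ℝ} (hu : u ∈ Icc 0 1) :
    0 ≤ peanoKernel 5 1 gaussLegendre3Nodes gaussLegendre3Weights u := by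
  obtain ⟨hlo, hhi⟩ := sqrt15_bounds
  have hs : √15 ^ 2 = 15 := Real.sq_sqrt (by norm_num)
  have hK : peanoKernel 5 1 gaussLegendre3Nodes gaussLegendre3Weights u = (1 - u) ^ 6 / 6 -
      (5 / 18 * max ((5 - √15) / 10 - u) 0 ^ 5 + 4 / 9 * max (1 / 2 - u) 0 ^ 5 +
        5 / 18 * max ((5 + √15) / 10 - u) 0 ^ 5) := by
    simp only [peanoKernel, Fin.sum_univ_three, gaussLegendre3Weights, gaussLegendre3Nodes,
      Matrix.cons_val_zero, Matrix.cons_val_one, Matrix.cons_val]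
    push_cast
    ring
  -- AM–GM suffices because `(5 - √15) / 10 ≈ 0.11270` exceeds `5 ^ 6 / (3 * 6 ^ 6) ≈ 0.11164`.
  have amgm : ∀ v, (5 - √15) / 10 ≤ v → 5 / 18 * (v - (5 - √15) / 10) ^ 5 ≤ v ^ 6 / 6 := by
    intro v hv
    have h := pow_five_mul_le_pow_six (sub_nonneg.2 hv) (by linarith : 0 ≤ (5 - √15) / 10)
    rw [sub_add_cancel] at h
    nlinarith [mul_nonneg (by linarith : (0 : ℝ) ≤ (5 - √15) / 10 - 5 ^ 6 / (3 * 6 ^ 6))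
      (pow_nonneg (sub_nonneg.2 hv) 5)]
  rw [hK]
  rcases le_or_gt u ((5 - √15) / 10) with h1 | h1
  · rw [max_eq_left (by linarith), max_eq_left (by linarith), max_eq_left (by linarith)]
    -- exactness of the rule on `(· - u) ^ 5`
    have hid : (1 - u) ^ 6 / 6 - (5 / 18 * ((5 - √15) / 10 - u) ^ 5 + 4 / 9 * (1 / 2 - u) ^ 5 +
        5 / 18 * ((5 + √15) / 10 - u) ^ 5) = u ^ 6 / 6 := by
      linear_combination
        (-13/1440 - √15^2/7200 + (11/240 + √15^2/3600)*u - u^2/12 + u^3/18) * hs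
    linarith [pow_nonneg hu.1 6]
  rcases le_or_gt u (1 / 2) with h2 | h2
  · rw [max_eq_right (by linarith), max_eq_left (by linarith), max_eq_left (by linarith)]
    have hid : (1 - u) ^ 6 / 6 - (5 / 18 * 0 ^ 5 + 4 / 9 * (1 / 2 - u) ^ 5 +
        5 / 18 * ((5 + √15) / 10 - u) ^ 5) = u ^ 6 / 6 - 5 / 18 * (u - (5 - √15) / 10) ^ 5 := by
      linear_combination
        (-13/1440 - √15^2/7200 + (11/240 + √15^2/3600)*u - u^2/12 + u^3/18) * hs
    linarith [amgm u h1.le]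
  rw [max_eq_right (by linarith), max_eq_right (by linarith)]
  rcases le_or_gt u ((5 + √15) / 10) with h3 | h3
  · rw [max_eq_left (by linarith), show (5 + √15) / 10 - u = 1 - u - (5 - √15) / 10 by ring]
    linarith [amgm (1 - u) (by linarith)]
  · rw [max_eq_right (by linarith)]
    linarith [pow_nonneg (sub_nonneg.2 hu.2) 6]

lemma lobatto4_peanoKernel_nonpos {u : ℝ} (hu : u ∈ Icc 0 1) :
    peanoKernel 5 1 lobatto4Nodes lobatto4Weights u ≤ 0 := by
  obtain ⟨hlo, hhi⟩ := sqrt5_bounds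
  have hs : √5 ^ 2 = 5 := Real.sq_sqrt (by norm_num)
  have hK : peanoKernel 5 1 lobatto4Nodes lobatto4Weights u = (1 - u) ^ 6 / 6 -
      (5 / 12 * max ((5 - √5) / 10 - u) 0 ^ 5 + 5 / 12 * max ((5 + √5) / 10 - u) 0 ^ 5 +
        (1 - u) ^ 5 / 12) := by
    simp only [peanoKernel, Fin.sum_univ_four, lobatto4Weights, lobatto4Nodes,
      Matrix.cons_val_zero, Matrix.cons_val_one, Matrix.cons_val, zero_sub,
      max_eq_right (neg_nonpos.2 hu.1), max_eq_left (sub_nonneg.2 hu.2)]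
    push_cast
    ring
  have hu0 := pow_nonneg hu.1 5
  have hu1 := pow_nonneg (sub_nonneg.2 hu.2) 5
  rw [hK]
  rcases le_or_gt u ((5 - √5) / 10) with h1 | h1
  · rw [max_eq_left (by linarith), max_eq_left (by linarith)]
    have hid : (1 - u) ^ 6 / 6 - (5 / 12 * ((5 - √5) / 10 - u) ^ 5 +
        5 / 12 * ((5 + √5) / 10 - u) ^ 5 + (1 - u) ^ 5 / 12) = u ^ 5 * (2 * u - 1) / 12 := by
      linear_combination
        (-11/960 - √5^2/4800 + (31/480 + √5^2/2400)*u - u^2/8 + u^3/12) * hs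
    nlinarith
  rcases le_or_gt u (1 / 2) with h2 | h2
  · rw [max_eq_right (by linarith), max_eq_left (by linarith)]
    have hid : (1 - u) ^ 6 / 6 - (5 / 12 * 0 ^ 5 + 5 / 12 * ((5 + √5) / 10 - u) ^ 5 +
        (1 - u) ^ 5 / 12) = u ^ 5 * (2 * u - 1) / 12 - 5 / 12 * (u - (5 - √5) / 10) ^ 5 := by
      linear_combination
        (-11/960 - √5^2/4800 + (31/480 + √5^2/2400)*u - u^2/8 + u^3/12) * hs
    nlinarith [pow_nonneg (by linarith : (0 : ℝ) ≤ u - (5 - √5) / 10) 5]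
  rw [max_eq_right (by linarith)]
  have htail : (1 - u) ^ 6 / 6 - (1 - u) ^ 5 / 12 ≤ 0 := by nlinarith
  have hmid : 0 ≤ max ((5 + √5) / 10 - u) 0 ^ 5 := pow_nonneg (le_max_right _ _) 5
  linarith

end

theorem gauss3_lobatto4_five_convex (I : Set ℝ) (hI : Convex ℝ I) (f : ℝ → ℝ)
    (hf : ContDiffOn ℝ 6 f I)
    (h6 : ∀ t ∈ I, 0 ≤ iteratedDerivWithin 6 f I t)
    (x y : ℝ) (hx : x ∈ I) (hy : y ∈ I) (hxy : x < y) :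
    (5 / 18) * f (((5 + Real.sqrt 15) / 10) * x + ((5 - Real.sqrt 15) / 10) * y) +
      (4 / 9) * f ((x + y) / 2) +
      (5 / 18) * f (((5 - Real.sqrt 15) / 10) * x + ((5 + Real.sqrt 15) / 10) * y) ≤
      (1 / (y - x)) * (∫ t in x..y, f t) ∧
    (1 / (y - x)) * (∫ t in x..y, f t) ≤
      (1 / 12) * f x + (5 / 12) * f (((5 + Real.sqrt 5) / 10) * x + ((5 - Real.sqrt 5) / 10) * y) +
      (5 / 12) * f (((5 - Real.sqrt 5) / 10) * x + ((5 + Real.sqrt 5) / 10) * y) + (1 / 12) * f y := by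
  have hsub : Icc x y ⊆ I := hI.ordConnected.out hx hy
  have hfxy : ContDiffOn ℝ (5 + 1 : ℕ) f (Icc x y) := hf.mono hsub
  have h6xy : ∀ t ∈ Icc x y, 0 ≤ iteratedDerivWithin (5 + 1) f (Icc x y) t := fun t ht => by
    rw [iteratedDerivWithin_Icc_eq hI hf hxy hsub ht]
    exact h6 t (hsub ht)
  rw [one_div, le_inv_mul_iff₀ (sub_pos.2 hxy), inv_mul_le_iff₀ (sub_pos.2 hxy)]
  constructor
  · refine (le_of_eq ?_).trans (sum_affine_le_integral_of_peanoKernel_nonneg (by norm_num) hxy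
      hfxy gaussLegendre3Nodes_mem gaussLegendre3_exact
      (fun u hu => gaussLegendre3_peanoKernel_nonneg hu) h6xy)
    simp only [Fin.sum_univ_three, gaussLegendre3Weights, gaussLegendre3Nodes,
      Matrix.cons_val_zero, Matrix.cons_val_one, Matrix.cons_val]
    ring_nf
  · refine (integral_le_sum_affine_of_peanoKernel_nonpos (by norm_num) hxy
      hfxy lobatto4Nodes_mem lobatto4_exact
      (fun u hu => lobatto4_peanoKernel_nonpos hu) h6xy).trans (le_of_eq ?_)
    simp only [Fin.sum_univ_four, lobatto4Weights, lobatto4Nodes,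
      Matrix.cons_val_zero, Matrix.cons_val_one, Matrix.cons_val]
    ring_nf
end

section
/- The Peano kernel K(x) = E[t ↦ (t−x)₊³/6] of the functional E[f] = (1/2)G₂[f] + (1/2)Lob₃[f] − ∫₋₁¹ f(t) dt satisfies K(x) ≥ 0 for all x ∈ [−1,1], where G₂[f] = f(−√3/3)+f(√3/3) and Lob₃[f] = (1/3)f(−1)+(4/3)f(0)+(1/3)f(1). -/
lemma peano_integrable (x a b : ℝ) :
    IntervalIntegrable (fun t => (max (t - x) 0) ^ 3 / 6) MeasureTheory.volume a b := by
  apply Continuous.intervalIntegrable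
  exact (((continuous_id.sub continuous_const).max continuous_const).pow 3).div_const 6

lemma peano_integral_val (x : ℝ) (hx1 : -1 ≤ x) (hx2 : x ≤ 1) :
    (∫ t in (-1:ℝ)..1, (max (t - x) 0) ^ 3 / 6) = (1 - x)^4 / 24 := by
  rw [← intervalIntegral.integral_add_adjacent_intervals (b := x)
      (peano_integrable x _ _) (peano_integrable x _ _)]
  have h1 : (∫ t in (-1:ℝ)..x, (max (t - x) 0) ^ 3 / 6) = 0 := by
    rw [intervalIntegral.integral_congr (g := fun _ => (0:ℝ))]
    · simp
    · intro t ht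
      rw [Set.uIcc_of_le hx1] at ht
      have : t - x ≤ 0 := by linarith [ht.2]
      simp [max_eq_right this]
  have h2 : (∫ t in x..(1:ℝ), (max (t - x) 0) ^ 3 / 6) = (1 - x)^4 / 24 := by
    rw [intervalIntegral.integral_congr (g := fun t => (t - x) ^ 3 / 6)]
    · have := intervalIntegral.integral_comp_sub_right (a := x) (b := 1)
        (fun u => u ^ 3 / 6) x
      rw [this]
      simp [intervalIntegral.integral_div]
      ring
    · intro t ht
      rw [Set.uIcc_of_le hx2] at ht
      have : 0 ≤ t - x := by linarith [ht.1]
      simp [max_eq_left this]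
  rw [h1, h2]; ring

set_option maxHeartbeats 1000000 in
theorem peano_kernel_nonneg_gauss2_lobatto3 (x : ℝ) (hx : x ∈ Set.Icc (-1:ℝ) 1) :
    0 ≤ (1 / 2) * ((max (-(Real.sqrt 3) / 3 - x) 0) ^ 3 / 6 +
          (max (Real.sqrt 3 / 3 - x) 0) ^ 3 / 6) +
        (1 / 2) * ((1 / 3) * ((max ((-1:ℝ) - x) 0) ^ 3 / 6) +
          (4 / 3) * ((max ((0:ℝ) - x) 0) ^ 3 / 6) +
          (1 / 3) * ((max ((1:ℝ) - x) 0) ^ 3 / 6)) -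
        ∫ t in (-1:ℝ)..1, (max (t - x) 0) ^ 3 / 6 := by
  obtain ⟨hx1, hx2⟩ := hx
  rw [peano_integral_val x hx1 hx2]
  have hr : Real.sqrt 3 ^ 2 = 3 := Real.sq_sqrt (by norm_num)
  have hrn : (0:ℝ) ≤ Real.sqrt 3 := Real.sqrt_nonneg 3
  have hra : (433:ℝ)/250 ≤ Real.sqrt 3 := by nlinarith
  have hrb : Real.sqrt 3 ≤ (26:ℝ)/15 := by nlinarith
  have hm1 : max ((-1:ℝ) - x) 0 = 0 := max_eq_right (by linarith)
  have hmp : max ((1:ℝ) - x) 0 = 1 - x := max_eq_left (by linarith)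
  rw [hm1, hmp]
  rcases le_or_gt x 0 with h0 | h0
  · rw [max_eq_left (by linarith : (0:ℝ) ≤ 0 - x)]
    rcases le_or_gt x (-(Real.sqrt 3) / 3) with hs | hs
    · rw [max_eq_left (by linarith), max_eq_left (by linarith)]
      have hsum : (-(Real.sqrt 3)/3 - x)^3 + (Real.sqrt 3/3 - x)^3 = -2*x^3 - 2*x := by
        linear_combination (-2*x/3) * hr
      have hu : (0:ℝ) ≤ 1 + x := by linarith
      have hv : (0:ℝ) ≤ -3*x - 1 := by nlinarith
      nlinarith [hsum, mul_nonneg (pow_nonneg hu 3) hv]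
    · rw [max_eq_right (by linarith), max_eq_left (by linarith)]
      have hy : (0:ℝ) ≤ -x := by linarith
      have h1 : (0:ℝ) ≤ Real.sqrt 3 + 3*x := by linarith
      have hx26 : -x ≤ 26/45 := by linarith
      norm_num only
      nlinarith [mul_nonneg hy h1, mul_nonneg (mul_nonneg hy hy) h1,
        mul_nonneg hy (mul_nonneg h1 h1), mul_nonneg (mul_nonneg h1 h1) h1,
        sq_nonneg (Real.sqrt 3 + 3*x), sq_nonneg x,
        mul_nonneg (sq_nonneg x) (sub_nonneg.2 hx26),
        mul_nonneg (mul_nonneg (sq_nonneg x) (sub_nonneg.2 hx26)) (sub_nonneg.2 hx26),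
        mul_nonneg (mul_nonneg hy (sub_nonneg.2 hx26)) (sub_nonneg.2 hx26),
        mul_nonneg hy (sub_nonneg.2 hx26),
        mul_nonneg (mul_nonneg hy hy) (sub_nonneg.2 hra)]
  · rw [max_eq_right (by linarith : (0:ℝ) - x ≤ 0),
        max_eq_right (by nlinarith : -(Real.sqrt 3) / 3 - x ≤ 0)]
    rcases le_or_gt x (Real.sqrt 3 / 3) with hs | hs
    · rw [max_eq_left (by linarith)]
      have hx0 : (0:ℝ) ≤ x := le_of_lt h0
      have h1 : (0:ℝ) ≤ Real.sqrt 3 - 3*x := by linarith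
      have hx26 : x ≤ 26/45 := by linarith
      norm_num only
      nlinarith [mul_nonneg hx0 h1, mul_nonneg (mul_nonneg hx0 hx0) h1,
        mul_nonneg hx0 (mul_nonneg h1 h1), mul_nonneg (mul_nonneg h1 h1) h1,
        sq_nonneg (Real.sqrt 3 - 3*x), sq_nonneg x,
        mul_nonneg (sq_nonneg x) (sub_nonneg.2 hx26),
        mul_nonneg (mul_nonneg (sq_nonneg x) (sub_nonneg.2 hx26)) (sub_nonneg.2 hx26),
        mul_nonneg (mul_nonneg hx0 (sub_nonneg.2 hx26)) (sub_nonneg.2 hx26),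
        mul_nonneg hx0 (sub_nonneg.2 hx26),
        mul_nonneg (mul_nonneg hx0 hx0) (sub_nonneg.2 hra)]
    · rw [max_eq_right (by linarith)]
      have hu : (0:ℝ) ≤ 1 - x := by linarith
      have hv : (0:ℝ) ≤ 3*x - 1 := by linarith
      nlinarith [mul_nonneg (pow_nonneg hu 3) hv]
end

section
/- If f ∈ C⁴[−1,1] with f⁽⁴⁾ ≥ 0 on [−1,1], then (1/2)[f(−√3/3) + f(√3/3)] + (1/2)[(1/3)f(−1) + (4/3)f(0) + (1/3)f(1)] − ∫₋₁¹ f(t) dt ≥ 0. -/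
/-!
The functional `E f = ½ G₂[f] + ½ Lob₃[f] - ∫₋₁¹ f` vanishes on cubics, so by Peano's
theorem `6 E f = ∫₋₁¹ K f⁽⁴⁾` with kernel `K t = E[(· - t)₊³]`. The kernel is even; with
`c = √3/3` it is `(1 - t)³ (3t - 1) / 12` on `[c, 1]` (the Simpson and integral terms) and
that plus `(c - t)³ / 2` (the Gauss node `c`) on `[0, c]`. Both pieces are nonnegative.
The identity itself is checked by integrating by parts four times on `[0, c]` and `[c, 1]`,
once for `f` and once for `f (-·)`.
-/

open Set Polynomial intervalIntegral

section IntegrationByParts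

variable {f : ℝ → ℝ} {s : Set ℝ} {a b : ℝ}

theorem integral_eval_mul_iteratedDerivWithin_succ (p : ℝ[X]) {n : ℕ} (hs : UniqueDiffOn ℝ s)
    (hf : ContDiffOn ℝ (n + 1) f s) (hab : uIcc a b ⊆ s) :
    ∫ x in a..b, p.eval x * iteratedDerivWithin (n + 1) f s x =
      p.eval b * iteratedDerivWithin n f s b - p.eval a * iteratedDerivWithin n f s a -
        ∫ x in a..b, (derivative p).eval x * iteratedDerivWithin n f s x := by
  have hderiv : ∀ x ∈ uIcc a b, HasDerivWithinAt (iteratedDerivWithin n f s)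
      (iteratedDerivWithin (n + 1) f s x) (uIcc a b) x := fun x hx => by
    rw [iteratedDerivWithin_succ]
    exact ((hf.differentiableOn_iteratedDerivWithin (by norm_cast; omega) hs x (hab hx)
      ).hasDerivWithinAt).mono hab
  exact integral_mul_deriv_eq_deriv_mul_of_hasDerivWithinAt
    (fun x _ => (p.hasDerivAt x).hasDerivWithinAt) hderiv
    (p.derivative.continuous.intervalIntegrable a b)
    ((hf.continuousOn_iteratedDerivWithin le_rfl hs).mono hab).intervalIntegrable

theorem integral_eval_mul_iteratedDerivWithin (p : ℝ[X]) {n : ℕ} (hs : UniqueDiffOn ℝ s)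
    (hf : ContDiffOn ℝ n f s) (hab : uIcc a b ⊆ s) :
    ∫ x in a..b, p.eval x * iteratedDerivWithin n f s x =
      ∑ k ∈ Finset.range n, (-1) ^ k *
        ((derivative^[k] p).eval b * iteratedDerivWithin (n - 1 - k) f s b -
          (derivative^[k] p).eval a * iteratedDerivWithin (n - 1 - k) f s a) +
      (-1) ^ n * ∫ x in a..b, (derivative^[n] p).eval x * f x := by
  induction n generalizing p with
  | zero => simp
  | succ n ih =>
    rw [integral_eval_mul_iteratedDerivWithin_succ p hs hf hab,
      ih _ (hf.of_le (by norm_cast; omega)), Finset.sum_range_succ']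
    simp only [Function.iterate_succ_apply, Nat.add_sub_cancel, Nat.sub_zero,
      Function.iterate_zero_apply, show ∀ k, n - 1 - k = n - (k + 1) from fun k => by omega,
      pow_succ, mul_neg_one, neg_mul, Finset.sum_neg_distrib]
    ring

end IntegrationByParts

theorem iteratedDerivWithin_comp_neg_Icc (f : ℝ → ℝ) (n : ℕ) (a x : ℝ) :
    iteratedDerivWithin n (fun y => f (-y)) (Icc (-a) a) x =
      (-1) ^ n * iteratedDerivWithin n f (Icc (-a) a) (-x) := by
  rw [iteratedDerivWithin_comp_neg]
  simp

noncomputable def gaussNode : ℝ := √3 / 3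

theorem gaussNode_sq : gaussNode ^ 2 = 1 / 3 := by
  rw [gaussNode, div_pow, Real.sq_sqrt (by norm_num)]; norm_num

theorem gaussNode_pos : 0 < gaussNode := by unfold gaussNode; positivity

theorem four_sevenths_lt_gaussNode : 4 / 7 < gaussNode := by
  nlinarith [gaussNode_sq, gaussNode_pos]

theorem gaussNode_lt_seven_twelfths : gaussNode < 7 / 12 := by
  nlinarith [gaussNode_sq, gaussNode_pos]

noncomputable def peanoKernelOuter : ℝ[X] := C (1 / 12) * (1 - X) ^ 3 * (3 * X - 1)

noncomputable def peanoKernelInner : ℝ[X] :=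
  peanoKernelOuter + C (1 / 2) * (C gaussNode - X) ^ 3

theorem peanoKernelOuter_nonneg {t : ℝ} (ht : 1 / 3 ≤ t) (ht' : t ≤ 1) :
    0 ≤ peanoKernelOuter.eval t := by
  simp only [peanoKernelOuter, eval_mul, eval_pow, eval_sub, eval_C, eval_one, eval_X, eval_ofNat]
  have : 0 ≤ 1 - t := by linarith
  have : 0 ≤ 3 * t - 1 := by linarith
  positivity

theorem eval_derivative_peanoKernelInner (x : ℝ) :
    peanoKernelInner.derivative.eval x = x * (3 * gaussNode - 2 + x - x ^ 2) := by
  simp [peanoKernelInner, peanoKernelOuter, derivative_mul, derivative_pow]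
  linear_combination (-3 / 2) * gaussNode_sq

theorem eval_peanoKernelInner_gaussNode :
    peanoKernelInner.eval gaussNode = (7 * gaussNode - 4) / 9 := by
  simp [peanoKernelInner, peanoKernelOuter]
  linear_combination (5 * gaussNode / 6 - (gaussNode ^ 2 + 1 / 3) / 4 - 1) * gaussNode_sq

theorem antitoneOn_peanoKernelInner : AntitoneOn peanoKernelInner.eval (Icc 0 gaussNode) := by
  refine antitoneOn_of_deriv_nonpos (convex_Icc _ _) peanoKernelInner.continuousOn
    peanoKernelInner.differentiableOn fun x hx => ?_
  rw [interior_Icc] at hx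
  rw [Polynomial.deriv, eval_derivative_peanoKernelInner]
  nlinarith [hx.1, sq_nonneg (x - 1 / 2), gaussNode_lt_seven_twelfths]

theorem peanoKernelInner_nonneg {t : ℝ} (ht : 0 ≤ t) (ht' : t ≤ gaussNode) :
    0 ≤ peanoKernelInner.eval t :=
  calc 0 ≤ peanoKernelInner.eval gaussNode := by
        rw [eval_peanoKernelInner_gaussNode]; linarith [four_sevenths_lt_gaussNode]
    _ ≤ peanoKernelInner.eval t :=
        antitoneOn_peanoKernelInner ⟨ht, ht'⟩ ⟨gaussNode_pos.le, le_rfl⟩ ht'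

noncomputable def halfPeanoIntegral (f : ℝ → ℝ) (s : Set ℝ) : ℝ :=
  (∫ t in 0..gaussNode, peanoKernelInner.eval t * iteratedDerivWithin 4 f s t) +
    ∫ t in gaussNode..1, peanoKernelOuter.eval t * iteratedDerivWithin 4 f s t

section HalfPeanoIntegral

variable {f : ℝ → ℝ} {s : Set ℝ}

theorem halfPeanoIntegral_nonneg (hf : ∀ t ∈ Icc (0 : ℝ) 1, 0 ≤ iteratedDerivWithin 4 f s t) :
    0 ≤ halfPeanoIntegral f s := by
  have hc1 : gaussNode ≤ 1 := by linarith [gaussNode_lt_seven_twelfths]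
  have hc3 : 1 / 3 ≤ gaussNode := by linarith [four_sevenths_lt_gaussNode]
  refine add_nonneg (integral_nonneg gaussNode_pos.le fun t ht => ?_)
    (integral_nonneg hc1 fun t ht => ?_)
  · exact mul_nonneg (peanoKernelInner_nonneg ht.1 ht.2) (hf t ⟨ht.1, ht.2.trans hc1⟩)
  · exact mul_nonneg (peanoKernelOuter_nonneg (hc3.trans ht.1) ht.2)
      (hf t ⟨gaussNode_pos.le.trans ht.1, ht.2⟩)

theorem halfPeanoIntegral_eq (hs : UniqueDiffOn ℝ s) (hf : ContDiffOn ℝ 4 f s)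
    (h01 : Icc 0 1 ⊆ s) :
    halfPeanoIntegral f s = 3 * f gaussNode + f 1 + 2 * f 0 -
      (gaussNode / 6 - 1 / 12) * iteratedDerivWithin 3 f s 0 -
      (3 * gaussNode - 2) * iteratedDerivWithin 1 f s 0 - 6 * ∫ t in 0..1, f t := by
  have hc : gaussNode ∈ Icc (0 : ℝ) 1 :=
    ⟨gaussNode_pos.le, by linarith [gaussNode_lt_seven_twelfths]⟩
  have hsub₁ : uIcc 0 gaussNode ⊆ s := (uIcc_subset_Icc ⟨le_rfl, zero_le_one⟩ hc).trans h01
  have hsub₂ : uIcc gaussNode 1 ⊆ s := (uIcc_subset_Icc hc ⟨zero_le_one, le_rfl⟩).trans h01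
  rw [halfPeanoIntegral, integral_eval_mul_iteratedDerivWithin _ hs hf hsub₁,
    integral_eval_mul_iteratedDerivWithin _ hs hf hsub₂,
    ← integral_add_adjacent_intervals (hf.continuousOn.mono hsub₁).intervalIntegrable
      (hf.continuousOn.mono hsub₂).intervalIntegrable]
  simp [Finset.sum_range_succ, Function.iterate_succ_apply', derivative_mul, derivative_pow,
    peanoKernelInner, peanoKernelOuter, integral_const_mul]
  linear_combination (-(gaussNode / 2) * iteratedDerivWithin 3 f s 0 -
    3 / 2 * iteratedDerivWithin 2 f s 0) * gaussNode_sq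

end HalfPeanoIntegral

theorem gauss2_lobatto3_average_ge_integral (f : ℝ → ℝ)
    (hf : ContDiffOn ℝ 4 f (Set.Icc (-1:ℝ) 1))
    (h4 : ∀ x ∈ Set.Icc (-1:ℝ) 1, 0 ≤ iteratedDerivWithin 4 f (Set.Icc (-1:ℝ) 1) x) :
    0 ≤ (1 / 2) * (f (-(Real.sqrt 3) / 3) + f (Real.sqrt 3 / 3)) +
        (1 / 2) * ((1 / 3) * f (-1) + (4 / 3) * f 0 + (1 / 3) * f 1) -
        ∫ t in (-1:ℝ)..1, f t := by
  have hs : UniqueDiffOn ℝ (Icc (-1 : ℝ) 1) := uniqueDiffOn_Icc (by norm_num)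
  have h01 : Icc (0 : ℝ) 1 ⊆ Icc (-1) 1 := Icc_subset_Icc (by norm_num) le_rfl
  have hf_neg : ContDiffOn ℝ 4 (fun x => f (-x)) (Icc (-1) 1) :=
    hf.comp contDiff_neg.contDiffOn fun x hx => ⟨neg_le_neg hx.2, by linarith [hx.1]⟩
  have hpos := halfPeanoIntegral_nonneg fun t ht => h4 t (h01 ht)
  have hpos_neg := halfPeanoIntegral_nonneg (f := fun x => f (-x)) (s := Icc (-1) 1)
    fun t ht => by
      rw [iteratedDerivWithin_comp_neg_Icc, show (-1 : ℝ) ^ 4 = 1 by norm_num, one_mul]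
      exact h4 (-t) ⟨neg_le_neg ht.2, by linarith [ht.1]⟩
  have hright := halfPeanoIntegral_eq hs hf h01
  have hleft := halfPeanoIntegral_eq hs hf_neg h01
  simp only [iteratedDerivWithin_comp_neg_Icc, neg_zero] at hleft
  have hint :
      ∫ t in (-1 : ℝ)..1, f t = (∫ t in (0 : ℝ)..1, f (-t)) + ∫ t in (0 : ℝ)..1, f t := by
    rw [integral_comp_neg, neg_zero, integral_add_adjacent_intervals] <;>
      exact (hf.continuousOn.mono (uIcc_subset_Icc (by norm_num) (by norm_num))).intervalIntegrable
  rw [neg_div, show √3 / 3 = gaussNode from rfl]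
  linarith
end

section
/- The spline function k(x) = 15(√5/5 − x)₊⁵ + 10(√15/5 − x)₊⁵ + 3(1−x)⁵(2x−1) is nonnegative for all x ∈ [0,1]. -/
theorem spline_k_nonneg (x : ℝ) (hx : x ∈ Set.Icc (0:ℝ) 1) :
    0 ≤ 15 * (max (Real.sqrt 5 / 5 - x) 0) ^ 5 +
        10 * (max (Real.sqrt 15 / 5 - x) 0) ^ 5 +
        3 * (1 - x) ^ 5 * (2 * x - 1) := by
  obtain ⟨hx0, hx1⟩ := hx
  have hs5 : (2.236 : ℝ) ≤ Real.sqrt 5 := by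
    nlinarith [Real.sq_sqrt (show (0:ℝ) ≤ 5 by norm_num), Real.sqrt_nonneg 5]
  have hs15 : (3.8725 : ℝ) ≤ Real.sqrt 15 := by
    nlinarith [Real.sq_sqrt (show (0:ℝ) ≤ 15 by norm_num), Real.sqrt_nonneg 15]
  have hm1 : (0:ℝ) ≤ max (Real.sqrt 5 / 5 - x) 0 := le_max_right _ _
  have hm2 : (0:ℝ) ≤ max (Real.sqrt 15 / 5 - x) 0 := le_max_right _ _
  rcases le_or_gt (1/2 : ℝ) x with h | h
  · have h1 : (0:ℝ) ≤ 3 * (1 - x) ^ 5 * (2 * x - 1) := by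
      apply mul_nonneg
      · apply mul_nonneg (by norm_num)
        exact pow_nonneg (by linarith) 5
      · linarith
    nlinarith [pow_nonneg hm1 5, pow_nonneg hm2 5]
  · -- x < 1/2, so sqrt 15 / 5 - x ≥ 0.7745 - x > 0
    have hb : (0.7745 : ℝ) - x ≤ Real.sqrt 15 / 5 - x := by linarith
    have hbpos : (0:ℝ) ≤ (0.7745 : ℝ) - x := by linarith
    have hm2e : max (Real.sqrt 15 / 5 - x) 0 = Real.sqrt 15 / 5 - x :=
      max_eq_left (by linarith)
    have hb5 : ((0.7745 : ℝ) - x) ^ 5 ≤ (max (Real.sqrt 15 / 5 - x) 0) ^ 5 := by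
      rw [hm2e]
      exact pow_le_pow_left₀ hbpos hb 5
    rcases le_or_gt (0.4472 : ℝ) x with h2 | h2
    · -- drop first term, use rational bound for second
      have key : (0:ℝ) ≤ 10 * ((0.7745 : ℝ) - x) ^ 5 + 3 * (1 - x) ^ 5 * (2 * x - 1) := by
        have hl : (0:ℝ) ≤ x - 0.4472 := by linarith
        have hu : (0:ℝ) ≤ 0.5 - x := by linarith
        nlinarith [pow_nonneg hl 6, mul_nonneg (pow_nonneg hl 5) hu,
          mul_nonneg (pow_nonneg hl 4) (pow_nonneg hu 2),
          mul_nonneg (pow_nonneg hl 3) (pow_nonneg hu 3),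
          mul_nonneg (pow_nonneg hl 2) (pow_nonneg hu 4),
          mul_nonneg hl (pow_nonneg hu 5), pow_nonneg hu 6]
      nlinarith [pow_nonneg hm1 5, hb5]
    · -- x < 0.4472 : first max also equals its argument
      have ha : (0.4472 : ℝ) - x ≤ Real.sqrt 5 / 5 - x := by linarith
      have hapos : (0:ℝ) ≤ (0.4472 : ℝ) - x := by linarith
      have hm1e : max (Real.sqrt 5 / 5 - x) 0 = Real.sqrt 5 / 5 - x :=
        max_eq_left (by linarith)
      have ha5 : ((0.4472 : ℝ) - x) ^ 5 ≤ (max (Real.sqrt 5 / 5 - x) 0) ^ 5 := by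
        rw [hm1e]
        exact pow_le_pow_left₀ hapos ha 5
      have key : (0:ℝ) ≤ 15 * ((0.4472 : ℝ) - x) ^ 5 + 10 * ((0.7745 : ℝ) - x) ^ 5 +
          3 * (1 - x) ^ 5 * (2 * x - 1) := by
        nlinarith [pow_nonneg hx0 6, mul_nonneg (pow_nonneg hx0 5) hapos,
          mul_nonneg (pow_nonneg hx0 4) (pow_nonneg hapos 2),
          mul_nonneg (pow_nonneg hx0 3) (pow_nonneg hapos 3),
          mul_nonneg (pow_nonneg hx0 2) (pow_nonneg hapos 4),
          mul_nonneg hx0 (pow_nonneg hapos 5), pow_nonneg hapos 6]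
      nlinarith [ha5, hb5]
end
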